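/- arXiv:2212.02590 — 3 statements merged into one kernel-verified Lean document; each statement's English description precedes it below -/
import Mathlib

section
/- If each Y_k is square-integrable, then Var[S] ≤ (D+1) · 𝒜₂, i.e. Var[∑_{k∈V} Y_k] ≤ (D+1) · ∑_{k∈V} E[(Y_k − c_k)²]. -/
open MeasureTheory ProbabilityTheory Filter

noncomputable section

/-- `G` is a dependency graph of the family `Y`: whenever `V₁, V₂` are disjoint sets of
vertices with no edge of `G` between them, the families `(Y k)_{k ∈ V₁}` and
`(Y k)_{k ∈ V₂}` are independent. -/
def IsDependencyGraph {Ω V E : Type*} [MeasurableSpace Ω] [MeasurableSpace E]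
    (μ : Measure Ω) (G : SimpleGraph V) (Y : V → Ω → E) : Prop :=
  ∀ V₁ V₂ : Set V, Disjoint V₁ V₂ →
    (∀ i ∈ V₁, ∀ j ∈ V₂, ¬ G.Adj i j) →
    IndepFun (fun ω (i : V₁) => Y i.1 ω) (fun ω (j : V₂) => Y j.1 ω) μ

/-- Kolmogorov distance between the law of `W` under `μ` and the standard normal law. -/
def dKolNormal {Ω : Type*} [MeasurableSpace Ω] (μ : Measure Ω) (W : Ω → ℝ) : ℝ :=
  ⨆ t : ℝ, |(μ {ω | W ω ≤ t}).toReal - (gaussianReal 0 1 (Set.Iic t)).toReal|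

/-- Product of two `L²` functions is integrable. -/
lemma mul_integrable_of_L2 {Ω : Type*} [MeasurableSpace Ω] {μ : Measure Ω} {f g : Ω → ℝ}
    (hf : MemLp f 2 μ) (hg : MemLp g 2 μ) : Integrable (fun ω => f ω * g ω) μ := by
  refine Integrable.mono' ((hf.integrable_sq.add hg.integrable_sq).div_const 2)
    (hf.aestronglyMeasurable.mul hg.aestronglyMeasurable)
    (Filter.Eventually.of_forall fun ω => ?_)
  rw [Real.norm_eq_abs, abs_mul]
  simp only [Pi.add_apply]
  have h := sq_nonneg (|f ω| - |g ω|)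
  have h2 : (|f ω| - |g ω|) ^ 2 = |f ω| ^ 2 - 2 * (|f ω| * |g ω|) + |g ω| ^ 2 := by ring
  rw [h2, sq_abs, sq_abs] at h
  linarith

/-- Variance bound for a sum of random variables with a dependency graph:
`Var[S] ≤ (D+1) · 𝒜₂`. -/
theorem variance_sum_le_dependency
    {Ω V : Type*} [MeasurableSpace Ω] [Fintype V] [Nonempty V]
    (μ : Measure Ω) [IsProbabilityMeasure μ]
    (Y : V → Ω → ℝ) (hYmeas : ∀ k, Measurable (Y k))
    (hL2 : ∀ k, MemLp (Y k) 2 μ)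
    (G : SimpleGraph V) [DecidableRel G.Adj]
    (hG : IsDependencyGraph μ G Y)
    (D : ℕ) (hD : ∀ k, G.degree k ≤ D)
    (c : V → ℝ) :
    variance (fun ω => ∑ k, Y k ω) μ ≤
      (D + 1 : ℝ) * ∑ k, ∫ ω, (Y k ω - c k) ^ 2 ∂μ := by
  classical
  set m : V → ℝ := fun k => ∫ ω, Y k ω ∂μ with hm
  set Z : V → Ω → ℝ := fun k ω => Y k ω - m k with hZdef
  have hZL2 : ∀ k, MemLp (Z k) 2 μ := fun k => (hL2 k).sub (memLp_const (m k))
  have hYint : ∀ k, Integrable (Y k) μ := fun k => (hL2 k).integrable one_le_two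
  have hZint : ∀ k, Integrable (Z k) μ := fun k => (hZL2 k).integrable one_le_two
  have hZmean : ∀ k, ∫ ω, Z k ω ∂μ = 0 := by
    intro k
    simp only [hZdef]
    rw [integral_sub (hYint k) (integrable_const _), integral_const]
    simp [hm]
  have hmul_int : ∀ j k, Integrable (fun ω => Z j ω * Z k ω) μ := fun j k =>
    mul_integrable_of_L2 (hZL2 j) (hZL2 k)
  set v : V → ℝ := fun k => ∫ ω, (Z k ω) ^ 2 ∂μ with hv
  have hv_nonneg : ∀ k, 0 ≤ v k := fun k =>
    integral_nonneg fun ω => sq_nonneg _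
  -- the sum is in L²
  have hSL2 : MemLp (fun ω => ∑ k, Y k ω) 2 μ := by
    have := memLp_finset_sum' (μ := μ) Finset.univ (f := Y) (fun i _ => hL2 i)
    convert this using 1
    ext ω; simp [Finset.sum_apply]
  -- expectation of the sum
  have hintS : (∫ ω, (∑ k, Y k ω) ∂μ) = ∑ k, m k := by
    rw [integral_finset_sum _ fun k _ => hYint k]
  -- variance as integral of square of centered sum
  have hvar : variance (fun ω => ∑ k, Y k ω) μ = ∫ ω, (∑ k, Z k ω) ^ 2 ∂μ := by
    rw [variance_eq_integral hSL2.aemeasurable]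
    congr 1
    ext ω
    simp only [Pi.pow_apply, Pi.sub_apply, hintS, hZdef]
    rw [← Finset.sum_sub_distrib]
  -- expand the square of the sum
  have hexp : ∫ ω, (∑ k, Z k ω) ^ 2 ∂μ
      = ∑ j, ∑ k, ∫ ω, Z j ω * Z k ω ∂μ := by
    have h1 : ∀ ω, (∑ k, Z k ω) ^ 2 = ∑ j, ∑ k, Z j ω * Z k ω := by
      intro ω
      rw [sq, Finset.sum_mul_sum]
    simp_rw [h1]
    rw [integral_finset_sum _ fun j _ =>
      integrable_finset_sum _ fun k _ => hmul_int j k]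
    exact Finset.sum_congr rfl fun j _ =>
      integral_finset_sum _ fun k _ => hmul_int j k
  -- independence kills off-diagonal, non-adjacent terms
  have hindep : ∀ j k, j ≠ k → ¬ G.Adj j k → ∫ ω, Z j ω * Z k ω ∂μ = 0 := by
    intro j k hjk hadj
    have hdisj : Disjoint ({j} : Set V) ({k} : Set V) :=
      Set.disjoint_singleton.mpr hjk
    have hedge : ∀ i ∈ ({j} : Set V), ∀ l ∈ ({k} : Set V), ¬ G.Adj i l := by
      intro i hi l hl
      rw [Set.mem_singleton_iff] at hi hl
      subst hi; subst hl; exact hadj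
    have hInd := hG {j} {k} hdisj hedge
    have hIndZ : IndepFun (Z j) (Z k) μ := by
      have := hInd.comp
        (φ := fun (f : ({j} : Set V) → ℝ) => f ⟨j, rfl⟩ - m j)
        (ψ := fun (f : ({k} : Set V) → ℝ) => f ⟨k, rfl⟩ - m k)
        (by fun_prop)
        (by fun_prop)
      exact this
    have := hIndZ.integral_mul_eq_mul_integral (hZint j).aestronglyMeasurable (hZint k).aestronglyMeasurable
    calc ∫ ω, Z j ω * Z k ω ∂μ = ∫ ω, (Z j * Z k) ω ∂μ := rfl
      _ = (∫ ω, Z j ω ∂μ) * ∫ ω, Z k ω ∂μ := this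
      _ = 0 := by rw [hZmean j, hZmean k, mul_zero]
  clear_value v Z m
  -- bound each term
  have hbound : ∀ j k, ∫ ω, Z j ω * Z k ω ∂μ
      ≤ if j = k ∨ G.Adj j k then (v j + v k) / 2 else 0 := by
    intro j k
    by_cases hA : j = k ∨ G.Adj j k
    · rw [if_pos hA]
      have hle : ∫ ω, Z j ω * Z k ω ∂μ
          ≤ ∫ ω, ((Z j ω) ^ 2 + (Z k ω) ^ 2) / 2 ∂μ := by
        refine integral_mono (hmul_int j k)
          (((hZL2 j).integrable_sq.add (hZL2 k).integrable_sq).div_const 2)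
          fun ω => ?_
        beta_reduce
        have h := sq_nonneg (Z j ω - Z k ω)
        have h2 : (Z j ω - Z k ω) ^ 2
            = Z j ω ^ 2 - 2 * (Z j ω * Z k ω) + Z k ω ^ 2 := by ring
        linarith
      refine hle.trans (le_of_eq ?_)
      rw [integral_div, integral_add (hZL2 j).integrable_sq (hZL2 k).integrable_sq]
      simp only [hv]
    · rw [if_neg hA]
      push_neg at hA
      exact le_of_eq (hindep j k hA.1 hA.2)
  -- counting: the number of `k` with `j = k ∨ G.Adj j k` is `deg j + 1`
  have hfilter : ∀ j : V, (Finset.univ.filter fun k => j = k ∨ G.Adj j k)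
      = insert j (G.neighborFinset j) := by
    intro j
    ext k
    simp [eq_comm, SimpleGraph.mem_neighborFinset]
  have hcard : ∀ j : V, (Finset.univ.filter fun k => j = k ∨ G.Adj j k).card
      = G.degree j + 1 := by
    intro j
    rw [hfilter j, Finset.card_insert_of_notMem (by simp), SimpleGraph.card_neighborFinset_eq_degree]
  -- symmetry of the relation
  have hsymm : ∀ j k : V, (j = k ∨ G.Adj j k) ↔ (k = j ∨ G.Adj k j) := by
    intro j k
    constructor <;> rintro (rfl | h)
    exacts [Or.inl rfl, Or.inr h.symm, Or.inl rfl, Or.inr h.symm]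
  -- combine
  have key : variance (fun ω => ∑ k, Y k ω) μ ≤ ∑ j, ((G.degree j : ℝ) + 1) * v j := by
    rw [hvar, hexp]
    have step1 : ∑ j, ∑ k, ∫ ω, Z j ω * Z k ω ∂μ
        ≤ ∑ j, ∑ k, (if j = k ∨ G.Adj j k then (v j + v k) / 2 else 0) :=
      Finset.sum_le_sum fun j _ => Finset.sum_le_sum fun k _ => hbound j k
    refine step1.trans (le_of_eq ?_)
    have expand : ∀ j k : V, (if j = k ∨ G.Adj j k then (v j + v k) / 2 else 0)
        = (if j = k ∨ G.Adj j k then v j / 2 else 0)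
          + (if j = k ∨ G.Adj j k then v k / 2 else 0) := by
      intro j k; by_cases h : j = k ∨ G.Adj j k <;> simp [h] <;> ring
    simp_rw [expand, Finset.sum_add_distrib]
    have hA : ∀ j : V, (∑ k, if j = k ∨ G.Adj j k then v j / 2 else 0)
        = ((G.degree j : ℝ) + 1) * (v j / 2) := by
      intro j
      rw [← Finset.sum_filter, Finset.sum_const, hcard j, nsmul_eq_mul]
      push_cast; ring
    have hB : (∑ j, ∑ k, if j = k ∨ G.Adj j k then v k / 2 else 0)
        = ∑ k, ((G.degree k : ℝ) + 1) * (v k / 2) := by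
      rw [Finset.sum_comm]
      refine Finset.sum_congr rfl fun k _ => ?_
      simp_rw [fun j => hsymm j k]
      rw [← Finset.sum_filter, Finset.sum_const, hcard k, nsmul_eq_mul]
      push_cast; ring
    rw [hB]
    simp_rw [hA]
    rw [← Finset.sum_add_distrib]
    refine Finset.sum_congr rfl fun j _ => ?_
    ring
  -- v j ≤ ∫ (Y j - c j)²
  have hvle : ∀ j, v j ≤ ∫ ω, (Y j ω - c j) ^ 2 ∂μ := by
    intro j
    have h1 : ∀ ω, (Y j ω - c j) ^ 2
        = (Z j ω) ^ 2 + ((2 * (m j - c j)) * Z j ω + (m j - c j) ^ 2) := by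
      intro ω; simp only [hZdef]; ring
    simp_rw [h1]
    have hint1 : Integrable (fun ω => 2 * (m j - c j) * Z j ω + (m j - c j) ^ 2) μ := by
      exact ((hZint j).const_mul _).add (integrable_const _)
    have hint2 : Integrable (fun ω => 2 * (m j - c j) * Z j ω) μ :=
      (hZint j).const_mul _
    rw [integral_add (hZL2 j).integrable_sq hint1,
      integral_add hint2 (integrable_const _),
      integral_const_mul, hZmean j, integral_const]
    simp only [mul_zero, zero_add, measure_univ, probReal_univ, ENNReal.toReal_one, smul_eq_mul, one_mul, hv]
    exact le_add_of_nonneg_right (sq_nonneg _)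
  refine key.trans ?_
  have step2 : ∑ j, ((G.degree j : ℝ) + 1) * v j ≤ ∑ j, ((D : ℝ) + 1) * v j := by
    refine Finset.sum_le_sum fun j _ => ?_
    refine mul_le_mul_of_nonneg_right ?_ (hv_nonneg j)
    have hdeg : (G.degree j : ℝ) ≤ (D : ℝ) := Nat.cast_le.mpr (hD j)
    linarith
  refine step2.trans ?_
  rw [← Finset.mul_sum]
  refine mul_le_mul_of_nonneg_left (Finset.sum_le_sum fun j _ => hvle j) (by positivity)
end
end

section
/- Let (X_k)_{1≤k≤n} admit a dependency graph of maximal degree m, and let the graph on vertex set Λ_{n,ℓ} connect α = (α₁,…,α_ℓ) and β = (β₁,…,β_ℓ) if and only if there exist i,j ∈ {1,…,ℓ} with α_i = β_j or with α_i adjacent to β_j in the dependency graph of (X_k). Then this graph is a dependency graph for the family (f(X_α))_{α∈Λ_{n,ℓ}} for any measurable f : 𝒮^ℓ → ℝ, it has N = n!/(n−ℓ)! vertices, and its maximal degree D satisfies D ≤ ℓ²(m+1)·C(n−1,ℓ−1)·(ℓ−1)! − 1 = ℓ²(m+1)·N/n − 1. -/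
open MeasureTheory ProbabilityTheory Filter

noncomputable section

/-! Two sets of tuples with no edge of `G'` between them use two disjoint sets of indices
with no edge of `G` between them; the corresponding families of `X` are therefore independent,
and so are measurable functions of them. A tuple `β` adjacent or equal to `α` has some
coordinate `β j` in the closed `G`-neighbourhood of some `α i`: there are `ℓ²` choices of
`(i, j)`, at most `m + 1` choices of `β j`, and `(n - 1)!/(n - ℓ)!` injective tuples with a
prescribed coordinate, which gives the degree bound. -/

open Function Finset

theorem IsDependencyGraph.of_tuples {Ω V A ι E F : Type*} [MeasurableSpace Ω]
    [MeasurableSpace E] [MeasurableSpace F] {μ : Measure Ω} {G : SimpleGraph V}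
    {X : V → Ω → E} (hG : IsDependencyGraph μ G X) (G' : SimpleGraph A) (σ : A → ι → V)
    (hG' : ∀ α β, α ≠ β → (∃ i j, σ α i = σ β j ∨ G.Adj (σ α i) (σ β j)) → G'.Adj α β)
    {f : A → (ι → E) → F} (hf : ∀ α, Measurable (f α)) :
    IsDependencyGraph μ G' (fun α ω => f α fun i => X (σ α i) ω) := by
  intro V₁ V₂ hdisj hedge
  set I₁ : Set V := {k | ∃ a ∈ V₁, ∃ i, σ a i = k}
  set I₂ : Set V := {k | ∃ b ∈ V₂, ∃ j, σ b j = k}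
  have hunlinked : ∀ a ∈ V₁, ∀ b ∈ V₂, ∀ i j,
      ¬ (σ a i = σ b j ∨ G.Adj (σ a i) (σ b j)) := fun a ha b hb i j h =>
    hedge a ha b hb (hG' a b (hdisj.ne_of_mem ha hb) ⟨i, j, h⟩)
  have hI : Disjoint I₁ I₂ := Set.disjoint_left.mpr <| by
    rintro _ ⟨a, ha, i, rfl⟩ ⟨b, hb, j, hba⟩
    exact hunlinked a ha b hb i j (Or.inl hba.symm)
  have hIedge : ∀ k ∈ I₁, ∀ k' ∈ I₂, ¬ G.Adj k k' := by
    rintro _ ⟨a, ha, i, rfl⟩ _ ⟨b, hb, j, rfl⟩ hadj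
    exact hunlinked a ha b hb i j (Or.inr hadj)
  exact (hG I₁ I₂ hI hIedge).comp
    (φ := fun g (a : V₁) => f a fun i => g ⟨σ a i, a, a.2, i, rfl⟩)
    (ψ := fun g (b : V₂) => f b fun j => g ⟨σ b j, b, b.2, j, rfl⟩)
    (measurable_pi_lambda _ fun a =>
      (hf a).comp (measurable_pi_lambda _ fun _ => measurable_pi_apply _))
    (measurable_pi_lambda _ fun b =>
      (hf b).comp (measurable_pi_lambda _ fun _ => measurable_pi_apply _))

section InjectiveTuples

variable {ι V : Type*} [Fintype ι] [Fintype V] [DecidableEq ι] [DecidableEq V]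

theorem Fintype.card_injective_eq_descFactorial :
    Fintype.card {α : ι → V // Injective α} =
      (Fintype.card V).descFactorial (Fintype.card ι) := by
  rw [Fintype.card_congr (Equiv.subtypeInjectiveEquivEmbedding ι V), Fintype.card_embedding_eq]

theorem card_filter_injective_apply_eq_le (j : ι) (v : V) :
    #{β : {α : ι → V // Injective α} | β.1 j = v} ≤
      (Fintype.card V - 1).descFactorial (Fintype.card ι - 1) := by
  let restrict (β : {β : {α : ι → V // Injective α} // β.1 j = v}) :
      {i // i ≠ j} ↪ {w // w ≠ v} :=
    ⟨fun i => ⟨β.1.1 i, fun h => i.2 (β.1.2 (h.trans β.2.symm))⟩,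
      fun _ _ h => Subtype.ext (β.1.2 (congrArg Subtype.val h))⟩
  have hrestrict : Injective restrict := by
    intro β₁ β₂ h
    refine Subtype.ext <| Subtype.ext <| funext fun i => ?_
    by_cases hi : i = j
    · subst hi; exact β₁.2.trans β₂.2.symm
    · exact congrArg Subtype.val (DFunLike.congr_fun h ⟨i, hi⟩)
  calc #{β : {α : ι → V // Injective α} | β.1 j = v}
      = Fintype.card {β : {α : ι → V // Injective α} // β.1 j = v} :=
        (Fintype.card_subtype _).symm
    _ ≤ Fintype.card ({i // i ≠ j} ↪ {w // w ≠ v}) := Fintype.card_le_of_injective _ hrestrict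
    _ = (Fintype.card V - 1).descFactorial (Fintype.card ι - 1) := by
        simp [Fintype.card_embedding_eq, Fintype.card_subtype_compl]

theorem card_filter_injective_apply_mem_le (j : ι) (S : Finset V) :
    #{β : {α : ι → V // Injective α} | β.1 j ∈ S} ≤
      #S * (Fintype.card V - 1).descFactorial (Fintype.card ι - 1) := by
  rw [mul_comm]
  refine card_le_mul_card_image_of_maps_to (f := fun β => β.1 j) (t := S)
    (fun β hβ => (mem_filter.1 hβ).2) _ fun v _ =>
      (card_le_card fun β hβ => ?_).trans (card_filter_injective_apply_eq_le j v)
  simp only [mem_filter, mem_univ, true_and] at hβ ⊢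
  exact hβ.2

theorem SimpleGraph.degree_add_one_le_of_adj_imp [Nonempty ι] {G : SimpleGraph V}
    [DecidableRel G.Adj] {m : ℕ} (hdeg : ∀ v, G.degree v ≤ m)
    {G' : SimpleGraph {α : ι → V // Injective α}} [DecidableRel G'.Adj]
    (hG' : ∀ α β, G'.Adj α β → ∃ i j, α.1 i = β.1 j ∨ G.Adj (α.1 i) (β.1 j))
    (α : {α : ι → V // Injective α}) :
    G'.degree α + 1 ≤
      Fintype.card ι ^ 2 * (m + 1) * (Fintype.card V - 1).descFactorial (Fintype.card ι - 1) := by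
  let closedNbhd (v : V) : Finset V := insert v (G.neighborFinset v)
  let linked : Finset {α : ι → V // Injective α} :=
    (univ : Finset (ι × ι)).biUnion fun p => {β | β.1 p.2 ∈ closedNbhd (α.1 p.1)}
  have hsub : insert α (G'.neighborFinset α) ⊆ linked := by
    intro β hβ
    obtain ⟨i, j, hij⟩ : ∃ i j, α.1 i = β.1 j ∨ G.Adj (α.1 i) (β.1 j) := by
      rcases mem_insert.1 hβ with rfl | hβ
      · exact ⟨Classical.arbitrary ι, _, Or.inl rfl⟩
      · exact hG' α β ((G'.mem_neighborFinset α β).1 hβ)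
    refine mem_biUnion.2 ⟨(i, j), mem_univ _, mem_filter.2 ⟨mem_univ _, ?_⟩⟩
    rcases hij with h | h
    · exact mem_insert.2 (Or.inl h.symm)
    · exact mem_insert_of_mem ((G.mem_neighborFinset _ _).2 h)
  have hlinked : #linked ≤
      Fintype.card ι ^ 2 * ((m + 1) * (Fintype.card V - 1).descFactorial (Fintype.card ι - 1)) := by
    rw [sq, ← Fintype.card_prod, ← card_univ]
    refine card_biUnion_le_card_mul _ _ _ fun p _ => ?_
    refine (card_filter_injective_apply_mem_le p.2 _).trans (Nat.mul_le_mul_right _ ?_)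
    exact (card_insert_le _ _).trans (Nat.add_le_add_right (hdeg _) 1)
  calc G'.degree α + 1 = #(insert α (G'.neighborFinset α)) := by
        rw [card_insert_of_notMem (G'.notMem_neighborFinset_self α),
          G'.card_neighborFinset_eq_degree]
    _ ≤ #linked := card_le_card hsub
    _ ≤ _ := hlinked.trans_eq (mul_assoc _ _ _).symm

end InjectiveTuples

theorem Nat.mul_descFactorial_pred (n : ℕ) {k : ℕ} (hk : 0 < k) :
    n * (n - 1).descFactorial (k - 1) = n.descFactorial k := by
  obtain ⟨k, rfl⟩ := Nat.exists_eq_succ_of_ne_zero hk.ne'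
  cases n with
  | zero => simp
  | succ n => exact (Nat.succ_descFactorial_succ n k).symm

theorem ustatistic_dependency_graph_general
    {Ω 𝒮 : Type*} [MeasurableSpace Ω] [MeasurableSpace 𝒮]
    (μ : Measure Ω)
    (n ℓ m : ℕ) (hℓ : 1 ≤ ℓ) (hℓn : ℓ ≤ n)
    (X : Fin n → Ω → 𝒮)
    (G : SimpleGraph (Fin n)) [DecidableRel G.Adj]
    (hG : IsDependencyGraph μ G X)
    (hdeg : ∀ k, G.degree k ≤ m)
    (G' : SimpleGraph {α : Fin ℓ → Fin n // Function.Injective α})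
    [DecidableRel G'.Adj]
    (hG'adj : ∀ α β, G'.Adj α β ↔ α ≠ β ∧
      ∃ i j : Fin ℓ, α.1 i = β.1 j ∨ G.Adj (α.1 i) (β.1 j))
    (f : (Fin ℓ → 𝒮) → ℝ) (hf : Measurable f) :
    IsDependencyGraph μ G' (fun α ω => f (fun i => X (α.1 i) ω)) ∧
    Fintype.card {α : Fin ℓ → Fin n // Function.Injective α} =
      Nat.factorial n / Nat.factorial (n - ℓ) ∧
    (∀ α, G'.degree α + 1 ≤ ℓ ^ 2 * (m + 1) * Nat.choose (n - 1) (ℓ - 1) *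
      Nat.factorial (ℓ - 1)) ∧
    n * (ℓ ^ 2 * (m + 1) * Nat.choose (n - 1) (ℓ - 1) * Nat.factorial (ℓ - 1)) =
      ℓ ^ 2 * (m + 1) * (Nat.factorial n / Nat.factorial (n - ℓ)) := by
  have : Nonempty (Fin ℓ) := ⟨⟨0, hℓ⟩⟩
  have hbound : ℓ ^ 2 * (m + 1) * Nat.choose (n - 1) (ℓ - 1) * Nat.factorial (ℓ - 1) =
      ℓ ^ 2 * (m + 1) * (n - 1).descFactorial (ℓ - 1) := by
    rw [Nat.descFactorial_eq_factorial_mul_choose]; ring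
  refine ⟨hG.of_tuples G' (fun α => α.1) (fun α β hne h => (hG'adj α β).2 ⟨hne, h⟩)
      fun _ => hf, ?_, fun α => ?_, ?_⟩
  · rw [Fintype.card_injective_eq_descFactorial, Fintype.card_fin, Fintype.card_fin,
      Nat.descFactorial_eq_div hℓn]
  · simpa [hbound] using
      SimpleGraph.degree_add_one_le_of_adj_imp hdeg (fun α β h => ((hG'adj α β).1 h).2) α
  · rw [hbound, ← Nat.descFactorial_eq_div hℓn, ← Nat.mul_descFactorial_pred n hℓ]
    ring

/-- The induced graph on tuples of pairwise distinct indices is a dependency graph for the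
family `(f(X_α))_α`; it has `n!/(n−ℓ)!` vertices and maximal degree at most
`ℓ²(m+1)·C(n−1,ℓ−1)·(ℓ−1)! − 1 = ℓ²(m+1)·N/n − 1`. -/
theorem ustatistic_dependency_graph
    {Ω 𝒮 : Type*} [MeasurableSpace Ω] [MeasurableSpace 𝒮]
    (μ : Measure Ω) [IsProbabilityMeasure μ]
    (n ℓ m : ℕ) (hℓ : 1 ≤ ℓ) (hℓn : ℓ ≤ n)
    (X : Fin n → Ω → 𝒮) (hXmeas : ∀ k, Measurable (X k))
    (G : SimpleGraph (Fin n)) [DecidableRel G.Adj]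
    (hG : IsDependencyGraph μ G X)
    (hdeg : ∀ k, G.degree k ≤ m)
    (G' : SimpleGraph {α : Fin ℓ → Fin n // Function.Injective α})
    [DecidableRel G'.Adj]
    (hG'adj : ∀ α β, G'.Adj α β ↔ α ≠ β ∧
      ∃ i j : Fin ℓ, α.1 i = β.1 j ∨ G.Adj (α.1 i) (β.1 j))
    (f : (Fin ℓ → 𝒮) → ℝ) (hf : Measurable f) :
    IsDependencyGraph μ G' (fun α ω => f (fun i => X (α.1 i) ω)) ∧
    Fintype.card {α : Fin ℓ → Fin n // Function.Injective α} =
      Nat.factorial n / Nat.factorial (n - ℓ) ∧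
    (∀ α, G'.degree α + 1 ≤ ℓ ^ 2 * (m + 1) * Nat.choose (n - 1) (ℓ - 1) *
      Nat.factorial (ℓ - 1)) ∧
    n * (ℓ ^ 2 * (m + 1) * Nat.choose (n - 1) (ℓ - 1) * Nat.factorial (ℓ - 1)) =
      ℓ ^ 2 * (m + 1) * (Nat.factorial n / Nat.factorial (n - ℓ)) :=
  ustatistic_dependency_graph_general μ n ℓ m hℓ hℓn X G hG hdeg G' hG'adj f hf
end
end

section
/- If each Y_k has a finite third moment, then |E[(S − E[S])³]| ≤ 3·(D+1)²·∑_{k∈V} E[|Y_k − E[Y_k]|³]. -/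
open MeasureTheory ProbabilityTheory Filter

noncomputable section

/-- three-variable AM-GM in absolute-value form. -/
lemma amgm3_abs (x y z : ℝ) : |x * y * z| ≤ (|x|^3 + |y|^3 + |z|^3)/3 := by
  have hx := abs_nonneg x; have hy := abs_nonneg y; have hz := abs_nonneg z
  rw [abs_mul, abs_mul]
  nlinarith [sq_nonneg (|x| - |y|), sq_nonneg (|y| - |z|), sq_nonneg (|x| - |z|),
    mul_nonneg (mul_nonneg hx hy) hz,
    mul_nonneg (add_nonneg (add_nonneg hx hy) hz) (sq_nonneg (|x| - |y|)),
    mul_nonneg (add_nonneg (add_nonneg hx hy) hz) (sq_nonneg (|y| - |z|)),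
    mul_nonneg (add_nonneg (add_nonneg hx hy) hz) (sq_nonneg (|x| - |z|))]

/-- One random variable split off from two others in a dependency graph is independent of
their (centred) product. -/
lemma indep_prod_aux {Ω V : Type*} [MeasurableSpace Ω] (μ : Measure Ω)
    (Y : V → Ω → ℝ) (G : SimpleGraph V) (hG : IsDependencyGraph μ G Y)
    (c : V → ℝ) (v w₁ w₂ : V) (hv1 : v ≠ w₁) (hv2 : v ≠ w₂)
    (ha1 : ¬ G.Adj v w₁) (ha2 : ¬ G.Adj v w₂) :
    IndepFun (fun ω => Y v ω - c v)
      (fun ω => (Y w₁ ω - c w₁) * (Y w₂ ω - c w₂)) μ := by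
  have hdisj : Disjoint ({v} : Set V) ({w₁, w₂} : Set V) := by
    simp [Set.disjoint_left, hv1, hv2]
  have hedge : ∀ i ∈ ({v} : Set V), ∀ j ∈ ({w₁, w₂} : Set V), ¬ G.Adj i j := by
    rintro i rfl j hj
    rcases hj with rfl | rfl
    · exact ha1
    · exact ha2
  have h := hG {v} {w₁, w₂} hdisj hedge
  have hw₁ : w₁ ∈ ({w₁, w₂} : Set V) := Or.inl rfl
  have hw₂ : w₂ ∈ ({w₁, w₂} : Set V) := Or.inr rfl
  have := h.comp (φ := fun p : (({v} : Set V) → ℝ) => p ⟨v, rfl⟩ - c v)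
    (ψ := fun p : (({w₁, w₂} : Set V) → ℝ) =>
      (p ⟨w₁, hw₁⟩ - c w₁) * (p ⟨w₂, hw₂⟩ - c w₂))
    (by fun_prop)
    (by fun_prop)
  exact this

/-- Counting lemma: the number of pairs `(j, k)` forming an "admissible" triple with a
fixed vertex `i` is at most `3 (D+1)²`. -/
lemma count_adm {V : Type*} [Fintype V] [DecidableEq V] (G : SimpleGraph V) [DecidableRel G.Adj]
    (D : ℕ) (hD : ∀ k, G.degree k ≤ D) (N : V → Finset V)
    (hN : ∀ v, N v = insert v (G.neighborFinset v)) (i : V)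
    (P : Finset (V × V))
    (hP : ∀ p : V × V, p ∈ P → (p.1 ∈ N i ∨ p.2 ∈ N i) ∧
      (i ∈ N p.1 ∨ p.2 ∈ N p.1) ∧ (i ∈ N p.2 ∨ p.1 ∈ N p.2)) :
    P.card ≤ 3 * (D + 1)^2 := by
  classical
  have hNcard : ∀ v, (N v).card ≤ D + 1 := by
    intro v
    rw [hN]
    refine (Finset.card_insert_le _ _).trans ?_
    have h1 : (G.neighborFinset v).card = G.degree v := G.card_neighborFinset_eq_degree v
    have h2 := hD v
    omega
  have hsymmN : ∀ u v, u ∈ N v → v ∈ N u := by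
    intro u v h
    rw [hN] at h ⊢
    simp only [Finset.mem_insert, SimpleGraph.mem_neighborFinset] at h ⊢
    rcases h with h | h
    · exact Or.inl h.symm
    · exact Or.inr h.symm
  have hsub : P ⊆ (N i).biUnion (fun j => ({j} : Finset V) ×ˢ (N i ∪ N j)) ∪
      (N i).biUnion (fun k => (N k) ×ˢ ({k} : Finset V)) := by
    intro p hp
    obtain ⟨h1, h2, h3⟩ := hP p hp
    by_cases hj : p.1 ∈ N i
    · apply Finset.mem_union_left
      rw [Finset.mem_biUnion]
      refine ⟨p.1, hj, ?_⟩
      rw [Finset.mem_product]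
      refine ⟨Finset.mem_singleton_self _, ?_⟩
      rcases h3 with h | h
      · exact Finset.mem_union_left _ (hsymmN _ _ h)
      · exact Finset.mem_union_right _ (hsymmN _ _ h)
    · have hk : p.2 ∈ N i := h1.resolve_left hj
      apply Finset.mem_union_right
      rw [Finset.mem_biUnion]
      refine ⟨p.2, hk, ?_⟩
      rw [Finset.mem_product]
      refine ⟨?_, Finset.mem_singleton_self _⟩
      rcases h2 with h | h
      · exact absurd (hsymmN _ _ h) hj
      · exact hsymmN _ _ h
  have hc1 : ((N i).biUnion (fun j => ({j} : Finset V) ×ˢ (N i ∪ N j))).card ≤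
      (D + 1) * (2 * (D + 1)) := by
    refine (Finset.card_biUnion_le).trans ?_
    refine (Finset.sum_le_card_nsmul _ _ (2 * (D + 1)) ?_).trans ?_
    · intro j _
      rw [Finset.card_product, Finset.card_singleton, one_mul]
      refine (Finset.card_union_le _ _).trans ?_
      have := hNcard i; have := hNcard j; omega
    · simp only [smul_eq_mul]
      exact Nat.mul_le_mul_right _ (hNcard i)
  have hc2 : ((N i).biUnion (fun k => (N k) ×ˢ ({k} : Finset V))).card ≤
      (D + 1) * (D + 1) := by
    refine (Finset.card_biUnion_le).trans ?_
    refine (Finset.sum_le_card_nsmul _ _ (D + 1) ?_).trans ?_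
    · intro k _
      rw [Finset.card_product, Finset.card_singleton, mul_one]
      exact hNcard k
    · simp only [smul_eq_mul]
      exact Nat.mul_le_mul_right _ (hNcard i)
  calc P.card ≤ _ := Finset.card_le_card hsub
    _ ≤ _ := Finset.card_union_le _ _
    _ ≤ (D + 1) * (2 * (D + 1)) + (D + 1) * (D + 1) := Nat.add_le_add hc1 hc2
    _ = 3 * (D + 1)^2 := by ring

/-- Bound on the third centred moment of a sum of random variables with a dependency graph:
`|E[(S − E[S])³]| ≤ 3 (D+1)² ∑_k E[|Y_k − E[Y_k]|³]`. -/
theorem third_moment_sum_dependency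
    {Ω V : Type*} [MeasurableSpace Ω] [Fintype V]
    (μ : Measure Ω) [IsProbabilityMeasure μ]
    (Y : V → Ω → ℝ) (hYmeas : ∀ k, Measurable (Y k))
    (hL3 : ∀ k, MemLp (Y k) 3 μ)
    (G : SimpleGraph V) [DecidableRel G.Adj]
    (hG : IsDependencyGraph μ G Y)
    (D : ℕ) (hD : ∀ k, G.degree k ≤ D)
    (S : Ω → ℝ) (hS : S = fun ω => ∑ k, Y k ω) :
    |∫ ω, (S ω - ∫ ω', S ω' ∂μ) ^ 3 ∂μ| ≤
      3 * (D + 1 : ℝ) ^ 2 * ∑ k, ∫ ω, |Y k ω - ∫ ω', Y k ω' ∂μ| ^ 3 ∂μ := by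
  classical
  set m : V → ℝ := fun k => ∫ ω, Y k ω ∂μ with hm
  set X : V → Ω → ℝ := fun k ω => Y k ω - m k with hX
  set a : V → ℝ := fun k => ∫ ω, |X k ω| ^ 3 ∂μ with ha
  have hXmeas : ∀ k, Measurable (X k) := fun k => (hYmeas k).sub measurable_const
  have hYint : ∀ k, Integrable (Y k) μ := fun k => (hL3 k).integrable (by norm_num)
  have hX3 : ∀ k, MemLp (X k) 3 μ := fun k => (hL3 k).sub (memLp_const (m k))
  have hXint : ∀ k, Integrable (X k) μ := fun k => (hX3 k).integrable (by norm_num)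
  have hXmean : ∀ k, ∫ ω, X k ω ∂μ = 0 := by
    intro k
    have h1 : ∫ ω, X k ω ∂μ = (∫ ω, Y k ω ∂μ) - ∫ _, m k ∂μ := by
      rw [hX, ← integral_sub (hYint k) (integrable_const _)]
    rw [h1, integral_const]
    simp [hm]
  have hcube : ∀ k, Integrable (fun ω => |X k ω| ^ 3) μ := by
    intro k
    have h := (hX3 k).integrable_norm_rpow (by norm_num) (by norm_num)
    refine h.congr (ae_of_all _ fun ω => ?_)
    show ‖X k ω‖ ^ ENNReal.toReal 3 = |X k ω| ^ 3
    rw [Real.norm_eq_abs, show (ENNReal.toReal 3) = ((3 : ℕ) : ℝ) by norm_num,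
      Real.rpow_natCast]
  have ha0 : ∀ k, 0 ≤ a k := fun k => integral_nonneg fun ω => by positivity
  have hPInt : ∀ i j k : V, Integrable (fun ω => X i ω * X j ω * X k ω) μ := by
    intro i j k
    refine Integrable.mono' ((((hcube i).add (hcube j)).add (hcube k)).div_const 3)
      (((hXmeas i).mul (hXmeas j)).mul (hXmeas k)).aestronglyMeasurable
      (ae_of_all _ fun ω => ?_)
    show ‖X i ω * X j ω * X k ω‖ ≤ _
    rw [Real.norm_eq_abs]
    exact amgm3_abs (X i ω) (X j ω) (X k ω)
  have hTb : ∀ i j k : V, |∫ ω, X i ω * X j ω * X k ω ∂μ| ≤ (a i + a j + a k)/3 := by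
    intro i j k
    have habs : |∫ ω, X i ω * X j ω * X k ω ∂μ| ≤ ∫ ω, |X i ω * X j ω * X k ω| ∂μ := by
      simpa only [Real.norm_eq_abs] using
        norm_integral_le_integral_norm (μ := μ) (f := fun ω => X i ω * X j ω * X k ω)
    refine habs.trans ?_
    have h1 : ∫ ω, |X i ω * X j ω * X k ω| ∂μ ≤
        ∫ ω, (|X i ω|^3 + |X j ω|^3 + |X k ω|^3)/3 ∂μ :=
      integral_mono (hPInt i j k).abs
        ((((hcube i).add (hcube j)).add (hcube k)).div_const 3)
        (fun ω => amgm3_abs _ _ _)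
    refine h1.trans_eq ?_
    rw [integral_div]
    rw [integral_add (μ := μ) (f := fun ω => |X i ω|^3 + |X j ω|^3)
      (g := fun ω => |X k ω|^3) ((hcube i).add (hcube j)) (hcube k)]
    rw [integral_add (hcube i) (hcube j)]
  set N : V → Finset V := fun v => insert v (G.neighborFinset v) with hN
  have hNmem : ∀ u v : V, u ∈ N v ↔ u = v ∨ G.Adj v u := by
    intro u v; simp [hN, SimpleGraph.mem_neighborFinset]
  have hsymmN : ∀ u v : V, u ∈ N v ↔ v ∈ N u := by
    intro u v; rw [hNmem, hNmem]
    constructor <;> rintro (h | h)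
    exacts [Or.inl h.symm, Or.inr h.symm, Or.inl h.symm, Or.inr h.symm]
  set Adm : V → V → V → Prop := fun i j k =>
    (j ∈ N i ∨ k ∈ N i) ∧ (i ∈ N j ∨ k ∈ N j) ∧ (i ∈ N k ∨ j ∈ N k) with hAdm
  have hAdm12 : ∀ i j k, Adm i j k ↔ Adm j i k := by
    intro i j k
    constructor <;> rintro ⟨h1, h2, h3⟩ <;> exact ⟨h2, h1, h3.symm⟩
  have hAdm13 : ∀ i j k, Adm i j k ↔ Adm k j i := by
    intro i j k
    constructor <;> rintro ⟨h1, h2, h3⟩ <;> exact ⟨h3.symm, h2.symm, h1.symm⟩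
  have hzero : ∀ i j k : V, ¬ Adm i j k → ∫ ω, X i ω * X j ω * X k ω ∂μ = 0 := by
    intro i j k hadm
    have key : ∀ v w₁ w₂ : V, v ∉ N w₁ → v ∉ N w₂ →
        ∫ ω, X v ω * (X w₁ ω * X w₂ ω) ∂μ = 0 := by
      intro v w₁ w₂ h1 h2
      rw [hNmem] at h1 h2
      push_neg at h1 h2
      have hind := indep_prod_aux μ Y G hG m v w₁ w₂ h1.1 h2.1
        (fun h => h1.2 h.symm) (fun h => h2.2 h.symm)
      have hmul := hind.integral_fun_mul_eq_mul_integral (hXmeas v).aestronglyMeasurable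
        ((hXmeas w₁).mul (hXmeas w₂)).aestronglyMeasurable
      rw [hmul, hXmean v, zero_mul]
    by_cases h1 : (j ∈ N i ∨ k ∈ N i)
    · by_cases h2 : (i ∈ N j ∨ k ∈ N j)
      · have h3 : ¬ (i ∈ N k ∨ j ∈ N k) := fun h3 => hadm ⟨h1, h2, h3⟩
        push_neg at h3
        have h := key k i j (fun hc => h3.1 ((hsymmN k i).mp hc))
          (fun hc => h3.2 ((hsymmN k j).mp hc))
        have e : (fun ω => X i ω * X j ω * X k ω)
            = (fun ω => X k ω * (X i ω * X j ω)) := by funext ω; ring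
        rw [e]; exact h
      · push_neg at h2
        have h := key j i k (fun hc => h2.1 ((hsymmN j i).mp hc))
          (fun hc => h2.2 ((hsymmN j k).mp hc))
        have e : (fun ω => X i ω * X j ω * X k ω)
            = (fun ω => X j ω * (X i ω * X k ω)) := by funext ω; ring
        rw [e]; exact h
    · push_neg at h1
      have h := key i j k (fun hc => h1.1 ((hsymmN i j).mp hc))
        (fun hc => h1.2 ((hsymmN i k).mp hc))
      have e : (fun ω => X i ω * X j ω * X k ω)
          = (fun ω => X i ω * (X j ω * X k ω)) := by funext ω; ring
      rw [e]; exact h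
  have hSint : ∫ ω, S ω ∂μ = ∑ k, m k := by
    rw [hS, integral_finset_sum _ (fun k _ => hYint k)]
  have hexp : ∀ ω, (S ω - ∫ ω', S ω' ∂μ)^3 = ∑ i, ∑ j, ∑ k, X i ω * X j ω * X k ω := by
    intro ω
    have h1 : S ω - ∫ ω', S ω' ∂μ = ∑ k, X k ω := by
      rw [hSint]
      simp only [hS]
      rw [← Finset.sum_sub_distrib]
    rw [h1, pow_succ, pow_two, Finset.sum_mul_sum, Finset.sum_mul]
    refine Finset.sum_congr rfl fun i _ => ?_
    rw [Finset.sum_mul]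
    refine Finset.sum_congr rfl fun j _ => ?_
    rw [Finset.mul_sum]
  have hsum : ∫ ω, (S ω - ∫ ω', S ω' ∂μ)^3 ∂μ
      = ∑ i, ∑ j, ∑ k, ∫ ω, X i ω * X j ω * X k ω ∂μ := by
    rw [show (fun ω => (S ω - ∫ ω', S ω' ∂μ)^3)
        = fun ω => ∑ i, ∑ j, ∑ k, X i ω * X j ω * X k ω from funext hexp]
    rw [integral_finset_sum _ (fun i _ => integrable_finset_sum _
      (fun j _ => integrable_finset_sum _ (fun k _ => hPInt i j k)))]
    refine Finset.sum_congr rfl fun i _ => ?_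
    rw [integral_finset_sum _ (fun j _ => integrable_finset_sum _ (fun k _ => hPInt i j k))]
    refine Finset.sum_congr rfl fun j _ => ?_
    rw [integral_finset_sum _ (fun k _ => hPInt i j k)]
  set e : V → V → V → ℝ := fun i j k => if Adm i j k then (1:ℝ) else 0 with he
  have hC : ∀ i, (∑ j, ∑ k, e i j k) ≤ 3 * ((D:ℝ) + 1)^2 := by
    intro i
    have hcard : (Finset.univ.filter (fun p : V × V => Adm i p.1 p.2)).card ≤ 3 * (D + 1)^2 :=
      count_adm G D hD N (fun v => rfl) i _ (fun p hp => (Finset.mem_filter.mp hp).2)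
    have heq : ∑ j, ∑ k, e i j k
        = ((Finset.univ.filter (fun p : V × V => Adm i p.1 p.2)).card : ℝ) := by
      simp only [he]
      rw [← Finset.sum_product']
      rw [show ((Finset.univ : Finset V) ×ˢ (Finset.univ : Finset V))
          = (Finset.univ : Finset (V × V)) from Finset.univ_product_univ]
      exact Finset.sum_boole _ _
    rw [heq]
    calc ((Finset.univ.filter (fun p : V × V => Adm i p.1 p.2)).card : ℝ)
        ≤ ((3 * (D + 1)^2 : ℕ) : ℝ) := Nat.cast_le.mpr hcard
      _ = 3 * ((D:ℝ) + 1)^2 := by push_cast; ring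
  have hS_common : ∑ v, a v * (∑ j, ∑ k, e v j k) ≤ 3 * ((D:ℝ) + 1)^2 * ∑ k, a k := by
    refine (Finset.sum_le_sum fun v _ =>
      mul_le_mul_of_nonneg_left (hC v) (ha0 v)).trans_eq ?_
    rw [← Finset.sum_mul, mul_comm]
  have hSA : ∑ i, ∑ j, ∑ k, e i j k * a i = ∑ v, a v * (∑ j, ∑ k, e v j k) := by
    refine Finset.sum_congr rfl fun i _ => ?_
    simp only [Finset.mul_sum]
    exact Finset.sum_congr rfl fun j _ => Finset.sum_congr rfl fun k _ => mul_comm _ _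
  have hSB : ∑ i, ∑ j, ∑ k, e i j k * a j = ∑ v, a v * (∑ j, ∑ k, e v j k) := by
    rw [Finset.sum_comm]
    refine Finset.sum_congr rfl fun v _ => ?_
    simp only [Finset.mul_sum]
    refine Finset.sum_congr rfl fun i _ => Finset.sum_congr rfl fun k _ => ?_
    rw [mul_comm]
    congr 1
    exact if_congr (hAdm12 i v k) rfl rfl
  have hSC : ∑ i, ∑ j, ∑ k, e i j k * a k = ∑ v, a v * (∑ j, ∑ k, e v j k) := by
    have h1 : ∀ i : V, ∑ j, ∑ k, e i j k * a k = ∑ k, ∑ j, e i j k * a k :=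
      fun i => Finset.sum_comm
    simp only [h1]
    rw [Finset.sum_comm]
    refine Finset.sum_congr rfl fun v _ => ?_
    rw [Finset.sum_comm]
    simp only [Finset.mul_sum]
    refine Finset.sum_congr rfl fun j _ => Finset.sum_congr rfl fun i _ => ?_
    rw [mul_comm]
    congr 1
    exact if_congr (hAdm13 i j v) rfl rfl
  have step1 : |∑ i, ∑ j, ∑ k, ∫ ω, X i ω * X j ω * X k ω ∂μ|
      ≤ ∑ i, ∑ j, ∑ k, (if Adm i j k then (a i + a j + a k)/3 else 0) := by
    refine (Finset.abs_sum_le_sum_abs _ _).trans (Finset.sum_le_sum fun i _ => ?_)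
    refine (Finset.abs_sum_le_sum_abs _ _).trans (Finset.sum_le_sum fun j _ => ?_)
    refine (Finset.abs_sum_le_sum_abs _ _).trans (Finset.sum_le_sum fun k _ => ?_)
    by_cases h : Adm i j k
    · rw [if_pos h]; exact hTb i j k
    · rw [if_neg h, hzero i j k h]; simp
  have step2 : ∑ i, ∑ j, ∑ k, (if Adm i j k then (a i + a j + a k)/3 else 0)
      ≤ 3 * ((D:ℝ) + 1)^2 * ∑ k, a k := by
    have hle : ∑ i, ∑ j, ∑ k, (if Adm i j k then (a i + a j + a k)/3 else 0)
        = ((∑ i, ∑ j, ∑ k, e i j k * a i) + (∑ i, ∑ j, ∑ k, e i j k * a j)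
          + (∑ i, ∑ j, ∑ k, e i j k * a k))/3 := by
      have hpt : ∀ i j k : V, (if Adm i j k then (a i + a j + a k)/3 else 0)
          = (e i j k * a i + e i j k * a j + e i j k * a k)/3 := by
        intro i j k
        simp only [he]
        split_ifs with h
        · ring
        · simp
      simp only [hpt]
      simp only [add_div, Finset.sum_add_distrib, Finset.sum_div]
    rw [hle, hSA, hSB, hSC,
      show ∀ s : ℝ, (s + s + s)/3 = s from fun s => by ring]
    exact hS_common
  calc |∫ ω, (S ω - ∫ ω', S ω' ∂μ) ^ 3 ∂μ|
      = |∑ i, ∑ j, ∑ k, ∫ ω, X i ω * X j ω * X k ω ∂μ| := by rw [hsum]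
    _ ≤ _ := step1
    _ ≤ 3 * ((D:ℝ) + 1)^2 * ∑ k, a k := step2
end
end
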